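/- arXiv:1201.0303 — 4 statements merged into one kernel-verified Lean document; each statement's English description precedes it below -/
import Mathlib

section
/- Let V be a finite dimensional vector space over a field, and let B' and B'' be two bases of V. For a ∈ {1,2}, let C_a be a partially ordered set with bijections b'_a : C_a → B' and b''_a : C_a → B''. Suppose that for each a, the transition matrix between B' and B'' is lower unitriangular with respect to the indexing (C_a, b'_a, b''_a); that is, ⟨(b''_a(c))^*, b'_a(c)⟩ = 1 for all c ∈ C_a, and ⟨(b''_a(c))^*, b'_a(d)⟩ ≠ 0 implies c ≤ d in C_a. Then b''_1 ∘ (b'_1)^{-1} = b''_2 ∘ (b'_2)^{-1} as maps B' → B''. -/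
/-! Composing the two indexings gives a permutation `σ := b₁''⁻¹ ∘ b₂'' ∘ b₂'⁻¹ ∘ b₁'` of `C₁`.
The unit diagonal of the second matrix makes the entry of the first one at `(σ d, d)` equal to `1`,
so triangularity of the first gives `σ d ≤ d`. An injective self-map of a finite poset that moves
no element up is the identity, by well-founded induction. -/

theorem Function.Injective.eq_self_of_apply_le {α : Type*} [PartialOrder α] [WellFoundedLT α]
    {f : α → α} (hf : Function.Injective f) (hle : ∀ a, f a ≤ a) (a : α) : f a = a := by
  induction a using WellFoundedLT.induction with
  | ind a ih =>
    rcases (hle a).lt_or_eq with hlt | heq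
    · exact hf (ih (f a) hlt)
    · exact heq

theorem stmt_0_general {K V : Type*} [Field K] [AddCommGroup V] [Module K V]
    [FiniteDimensional K V]
    {ι ι' C₁ C₂ : Type*} [PartialOrder C₁]
    (B' : Module.Basis ι K V) (B'' : Module.Basis ι' K V)
    (b₁' : C₁ ≃ ι) (b₁'' : C₁ ≃ ι') (b₂' : C₂ ≃ ι) (b₂'' : C₂ ≃ ι')
    (h₁tri : ∀ c d : C₁, B''.repr (B' (b₁' d)) (b₁'' c) ≠ 0 → c ≤ d)
    (h₂diag : ∀ c : C₂, B''.repr (B' (b₂' c)) (b₂'' c) = 1) :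
    ∀ x : ι, b₁'' (b₁'.symm x) = b₂'' (b₂'.symm x) := by
  have : Finite ι := Module.Finite.finite_basis B'
  have : Finite C₁ := .of_equiv ι b₁'.symm
  let σ : C₁ ≃ C₁ := (b₁'.trans b₂'.symm).trans (b₂''.trans b₁''.symm)
  have hσ_le (d : C₁) : σ d ≤ d := by
    apply h₁tri
    have h := h₂diag (b₂'.symm (b₁' d))
    rw [b₂'.apply_symm_apply] at h
    simp [σ, h]
  intro x
  have hσ := σ.injective.eq_self_of_apply_le hσ_le (b₁'.symm x)
  simp only [σ, Equiv.trans_apply, Equiv.apply_symm_apply] at hσ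
  rw [← hσ, b₁''.apply_symm_apply]

/-- uniqueness of the bijection given lower unitriangular
transition matrices with respect to two poset indexings. -/
theorem stmt_0 {K V : Type*} [Field K] [AddCommGroup V] [Module K V]
    [FiniteDimensional K V]
    {ι ι' C₁ C₂ : Type*} [PartialOrder C₁] [PartialOrder C₂]
    (B' : Module.Basis ι K V) (B'' : Module.Basis ι' K V)
    (b₁' : C₁ ≃ ι) (b₁'' : C₁ ≃ ι') (b₂' : C₂ ≃ ι) (b₂'' : C₂ ≃ ι')
    (h₁diag : ∀ c : C₁, B''.repr (B' (b₁' c)) (b₁'' c) = 1)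
    (h₁tri : ∀ c d : C₁, B''.repr (B' (b₁' d)) (b₁'' c) ≠ 0 → c ≤ d)
    (h₂diag : ∀ c : C₂, B''.repr (B' (b₂' c)) (b₂'' c) = 1)
    (h₂tri : ∀ c d : C₂, B''.repr (B' (b₂' d)) (b₂'' c) ≠ 0 → c ≤ d) :
    ∀ x : ι, b₁'' (b₁'.symm x) = b₂'' (b₂'.symm x) :=
  stmt_0_general B' B'' b₁' b₁'' b₂' b₂'' h₁tri h₂diag
end

section
/- In the setting of a lower normal crystal B with involution σ, define the relation (b', b'') ≈ (c', c'') on B × B if one of: (i) there is i with φ_i(b') = φ_i(b'') and (c', c'') = (ẽ_i b', ẽ_i b''); (ii) there is i with φ_i(b') = φ_i(b'') > 0 and (c', c'') = (f̃_i b', f̃_i b''); (iii) (c', c'') = (σ(b'), σ(b'')). Define b' ≤_str b'' iff wt(b') = wt(b'') and for every finite chain (b', b'') = (b'_0, b''_0) ≈ ... ≈ (b'_ℓ, b''_ℓ) one has φ_i(b'_ℓ) ≤ φ_i(b''_ℓ) for all i. Then ≤_str is transitive: if b' ≤_str b'' and b'' ≤_str b''', then b' ≤_str b'''. -/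
/-!
If `b' ≤_str b''` and `b'' ≤_str b'''`, every `≈`-chain from `(b', b''')` to `(x, z)` is shadowed
by chains from `(b', b'')` to `(x, m)` and from `(b'', b''')` to `(m, z)` with a common `m`; the
two hypotheses give `φᵢ(x) ≤ φᵢ(m) ≤ φᵢ(z)`, which is the conclusion. The shadow extends by one
step because a move of type (i) or (ii) on `(x, z)` needs `φᵢ(x) = φᵢ(z)`, which squeezes `φᵢ(m)`
to the same value, so the same move is allowed on `(x, m)` and on `(m, z)`.
-/

namespace Stmt12

variable {B I P : Type*}

/-- Elementary move `≈` on pairs of crystal elements. -/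
def Move (φ : I → B → ℤ) (e f : I → B → Option B) (σ : B → B)
    (p q : B × B) : Prop :=
  (∃ i, φ i p.1 = φ i p.2 ∧ e i p.1 = some q.1 ∧ e i p.2 = some q.2) ∨
  (∃ i, φ i p.1 = φ i p.2 ∧ 0 < φ i p.1 ∧
    f i p.1 = some q.1 ∧ f i p.2 = some q.2) ∨
  (q = (σ p.1, σ p.2))

/-- The string order `≤_str`. -/
def leStr (wt : B → P) (φ : I → B → ℤ) (e f : I → B → Option B) (σ : B → B)
    (b' b'' : B) : Prop :=
  wt b' = wt b'' ∧
    ∀ p : B × B, Relation.ReflTransGen (Move φ e f σ) (b', b'') p →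
      ∀ i : I, φ i p.1 ≤ φ i p.2

section

variable {φ : I → B → ℤ} {e f : I → B → Option B} {σ : B → B}

theorem Move.exists_parallel (he : ∀ (i : I) (b : B), ∃ c, e i b = some c)
    (hf : ∀ (i : I) (b : B), 0 < φ i b → ∃ c, f i b = some c)
    {p q : B × B} (hmove : Move φ e f σ p q) {m : B}
    (hlow : ∀ i, φ i p.1 ≤ φ i m) (hhigh : ∀ i, φ i m ≤ φ i p.2) :
    ∃ m', Move φ e f σ (p.1, m) (q.1, m') ∧ Move φ e f σ (m, p.2) (m', q.2) := by
  have squeeze : ∀ i, φ i p.1 = φ i p.2 → φ i m = φ i p.1 := fun i h =>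
    le_antisymm (h ▸ hhigh i) (hlow i)
  rcases hmove with ⟨i, hφ, he₁, he₂⟩ | ⟨i, hφ, hpos, hf₁, hf₂⟩ | rfl
  · obtain ⟨c, hc⟩ := he i m
    have hm := squeeze i hφ
    exact ⟨c, Or.inl ⟨i, hm.symm, he₁, hc⟩, Or.inl ⟨i, hm.trans hφ, hc, he₂⟩⟩
  · have hm := squeeze i hφ
    obtain ⟨c, hc⟩ := hf i m (hm ▸ hpos)
    exact ⟨c, Or.inr (Or.inl ⟨i, hm.symm, hpos, hf₁, hc⟩),
      Or.inr (Or.inl ⟨i, hm.trans hφ, hm ▸ hpos, hc, hf₂⟩)⟩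
  · exact ⟨σ m, Or.inr (Or.inr rfl), Or.inr (Or.inr rfl)⟩

theorem exists_parallel_chains_of_leStr {wt : B → P}
    (he : ∀ (i : I) (b : B), ∃ c, e i b = some c)
    (hf : ∀ (i : I) (b : B), 0 < φ i b → ∃ c, f i b = some c)
    {a b c : B} (hab : leStr wt φ e f σ a b) (hbc : leStr wt φ e f σ b c)
    {p : B × B} (hp : Relation.ReflTransGen (Move φ e f σ) (a, c) p) :
    ∃ m, Relation.ReflTransGen (Move φ e f σ) (a, b) (p.1, m) ∧
      Relation.ReflTransGen (Move φ e f σ) (b, c) (m, p.2) := by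
  induction hp with
  | refl => exact ⟨b, .refl, .refl⟩
  | tail _ hmove ih =>
    obtain ⟨m, hm₁, hm₂⟩ := ih
    obtain ⟨m', hstep₁, hstep₂⟩ :=
      hmove.exists_parallel (m := m) he hf (hab.2 _ hm₁) (hbc.2 _ hm₂)
    exact ⟨m', hm₁.tail hstep₁, hm₂.tail hstep₂⟩

end

/-- the string order is transitive (in a lower normal crystal
with involution σ, where `ẽᵢ` is everywhere defined and `f̃ᵢ b` is defined
whenever `φᵢ(b) > 0`). -/
theorem stmt_12 (wt : B → P) (φ : I → B → ℤ) (e f : I → B → Option B)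
    (σ : B → B)
    (he : ∀ (i : I) (b : B), ∃ c, e i b = some c)
    (hf : ∀ (i : I) (b : B), 0 < φ i b → ∃ c, f i b = some c)
    (b' b'' b''' : B)
    (h1 : leStr wt φ e f σ b' b'') (h2 : leStr wt φ e f σ b'' b''') :
    leStr wt φ e f σ b' b''' := by
  refine ⟨h1.1.trans h2.1, fun p hp i => ?_⟩
  obtain ⟨m, hm₁, hm₂⟩ := exists_parallel_chains_of_leStr he hf h1 h2 hp
  exact (h1.2 _ hm₁ i).trans (h2.2 _ hm₂ i)

end Stmt12
end

section
/- Let N be a positive integer, β_1, ..., β_N vectors in a rational vector space V, and γ_1, ..., γ_N linear functionals on V such that ⟨γ_k, β_ℓ⟩ ≥ 0 for k ≥ ℓ, ⟨γ_k, β_ℓ⟩ ≤ 0 for k < ℓ, and ⟨γ_k, β_k⟩ = 1. For n, m ∈ ℕ^N with Σ n_t β_t = Σ m_t β_t, write n ≤ m iff Σ_{t=1}^k ⟨γ_k, β_t⟩ n_t ≤ Σ_{t=1}^k ⟨γ_k, β_t⟩ m_t for all k. Then ≤ is refined by the lexicographic order: n ≤ m and n ≠ m implies n <_lex m; in particular ≤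 is antisymmetric. -/
/-
The k-th inequality defining n ≤ m only involves the indices t ≤ k, and the coefficient of
index k in it is ⟨γ_k, β_k⟩ = 1. So if n and m agree before k, it reduces to n_k ≤ m_k. Hence m
cannot be lexicographically smaller than n: at the first index where they differ, m would have
the smaller entry. As the lexicographic order is linear, n ≠ m forces n <_lex m.
-/

/-- Strict lexicographic order on ℕ-tuples. -/
def lexLtNat {N : ℕ} (n m : Fin N → ℕ) : Prop :=
  ∃ k : Fin N, n k < m k ∧ ∀ j : Fin N, j < k → n j = m j

open Finset

theorem lexLtNat_iff_toLex_lt {N : ℕ} (n m : Fin N → ℕ) :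
    lexLtNat n m ↔ toLex n < toLex m :=
  exists_congr fun _ => and_comm

theorem le_of_unitriangular_sum_le {ι R : Type*} [LinearOrder ι] [Fintype ι] [Semiring R]
    [PartialOrder R] [IsOrderedCancelAddMonoid R] {a x y : ι → R} {k : ι} (hdiag : a k = 1)
    (hagree : ∀ j < k, x j = y j)
    (h : ∑ t ∈ univ.filter (· ≤ k), a t * x t ≤ ∑ t ∈ univ.filter (· ≤ k), a t * y t) :
    x k ≤ y k := by
  have hsplit : univ.filter (· ≤ k) = insert k (univ.filter (· < k)) := by
    ext t
    simp [le_iff_lt_or_eq, or_comm]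
  have hbelow : ∑ t ∈ univ.filter (· < k), a t * x t = ∑ t ∈ univ.filter (· < k), a t * y t :=
    sum_congr rfl fun t ht => by rw [hagree t (mem_filter.mp ht).2]
  rw [hsplit, sum_insert (by simp), sum_insert (by simp), hbelow, hdiag, one_mul, one_mul] at h
  exact le_of_add_le_add_right h

theorem stmt_13_general {V : Type*} [AddCommGroup V] [Module ℚ V] (N : ℕ)
    (β : Fin N → V) (γ : Fin N → (V →ₗ[ℚ] ℚ))
    (hdiag : ∀ k : Fin N, γ k (β k) = 1)
    (n m : Fin N → ℕ)
    (hle : ∀ k : Fin N,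
      ∑ t ∈ Finset.univ.filter (fun t => t ≤ k), γ k (β t) * n t ≤
        ∑ t ∈ Finset.univ.filter (fun t => t ≤ k), γ k (β t) * m t) :
    n ≠ m → lexLtNat n m := by
  intro hne
  rw [lexLtNat_iff_toLex_lt]
  refine lt_of_le_of_ne (not_lt.mp ?_) (toLex.injective.ne hne)
  rintro ⟨k, hagree, hlt⟩
  have hnk : (n k : ℚ) ≤ m k :=
    le_of_unitriangular_sum_le (k := k) (hdiag k)
      (fun j hj => congrArg Nat.cast (hagree j hj).symm) (hle k)
  exact (Nat.cast_le.mp hnk).not_gt hlt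

/-- the order on Lusztig data determined by the chamber
coweight pairings is refined by the lexicographic order; in particular it
is antisymmetric. -/
theorem stmt_13 {V : Type*} [AddCommGroup V] [Module ℚ V] (N : ℕ) (hN : 0 < N)
    (β : Fin N → V) (γ : Fin N → (V →ₗ[ℚ] ℚ))
    (hpos : ∀ k l : Fin N, l ≤ k → 0 ≤ γ k (β l))
    (hneg : ∀ k l : Fin N, k < l → γ k (β l) ≤ 0)
    (hdiag : ∀ k : Fin N, γ k (β k) = 1)
    (n m : Fin N → ℕ)
    (hwt : ∑ t, (n t : ℚ) • β t = ∑ t, (m t : ℚ) • β t)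
    (hle : ∀ k : Fin N,
      ∑ t ∈ Finset.univ.filter (fun t => t ≤ k), γ k (β t) * n t ≤
        ∑ t ∈ Finset.univ.filter (fun t => t ≤ k), γ k (β t) * m t) :
    n ≠ m → lexLtNat n m :=
  stmt_13_general N β γ hdiag n m hle
end

section
/- Let f be an associative Q_+-graded algebra generated by elements θ_i (i ∈ I) with divided powers θ_i^{(n)}, and suppose B', B'' are two bases of f satisfying the canonical-type axioms, giving rise (as in Kashiwara's theory) to structure maps φ_i, f̃_i^max on each basis. Fix i ∈ I, elements b' ∈ B' and b'' ∈ B'' of the same weight, set n_1 = φ_i(b') and b'_1 = f̃_i^max b'. If ⟨(b'')^*, b'⟩ ≠ 0, then either φ_i(b'') > n_1, or b'' = ẽ_i^{n_1} b''_1 for some b''_1 ∈ B'' with φ_i(b''_1) = 0 and ⟨(b''_1)^*, b'_1⟩ = ⟨(b'')^*, b'⟩. Consequently, for any finite sequence i = (i_1,...,i_ℓ) in I, ⟨(b'')^*, b'⟩ ≠ 0 implies Φ_i(b') ≤_lex Φ_i(b''), where Φ_i is the string parametrization. -/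
/-!
Write `Fₚ = θᵢᵖ f`. Since `b' ≡ θᵢ⁽ⁿ⁾ f̃ᵢᵐᵃˣ b' mod Fₙ₊₁` with `n = φᵢ(b')`, the vector `b'` lies
in `Fₙ`, which is spanned by the `b''` with `φᵢ(b'') ≥ n`; so its `b''`-coordinate vanishes unless
`φᵢ(b'') ≥ n`. When `φᵢ(b'') = n`, the `b''`-coordinate of `θᵢ⁽ⁿ⁾ x` equals the
`f̃ᵢᵐᵃˣ b''`-coordinate of `x`, because modulo `Fₙ₊₁` left multiplication by `θᵢ⁽ⁿ⁾` sends the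
basis vectors with `φᵢ = 0` bijectively to those with `φᵢ = n` and kills the others.
Iterating along a list of indices gives the lexicographic comparison.
-/

namespace Stmt16

variable {I : Type*} {β : Type*}

/-- String parametrization along a list of indices, given the functions
`φᵢ` and `f̃ᵢ^max` on a basis of canonical type. -/
def stringPhi (φ : I → β → ℕ) (fmax : I → β → β) : List I → β → List ℕ
  | [], _ => []
  | i :: l, b => φ i b :: stringPhi φ fmax l (fmax i b)

/-- Lexicographic order on lists of naturals (of equal length). -/
def lexLeL : List ℕ → List ℕ → Prop
  | [], [] => True
  | a :: xs, b :: ys => a < b ∨ (a = b ∧ lexLeL xs ys)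
  | _, _ => False

open LinearMap Submodule

theorem _root_.Module.Basis.repr_eq_zero_of_mem_span_image {R M ι : Type*} [Semiring R]
    [AddCommMonoid M] [Module R M] (B : Module.Basis ι R M) {s : Set ι} {v : M}
    (hv : v ∈ span R (B '' s)) {i : ι} (hi : i ∉ s) : B.repr v i = 0 :=
  Finsupp.notMem_support_iff.1 fun h => hi (B.mem_span_image.1 hv h)

theorem _root_.Module.Basis.eq_of_sub_mem_span_image {R M ι : Type*} [Ring R] [Nontrivial R]
    [AddCommGroup M] [Module R M] (B : Module.Basis ι R M) {s : Set ι} {i j : ι}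
    (h : B i - B j ∈ span R (B '' s)) (hi : i ∉ s) : j = i := by
  classical
  by_contra hji
  simpa [Finsupp.single_apply, hji] using B.repr_eq_zero_of_mem_span_image h hi

section PowerFiltration

variable {K F : Type*} [CommSemiring K] [Semiring F] [Algebra K F]

theorem range_mulLeft_pow_succ_le (a : F) (p : ℕ) :
    range (mulLeft K (a ^ (p + 1))) ≤ range (mulLeft K (a ^ p)) := by
  rintro _ ⟨y, rfl⟩
  exact ⟨a * y, by simp [pow_succ]⟩

theorem smul_pow_mul_mem_range_mulLeft_pow_add (c : K) (a : F) {m : ℕ} {x : F}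
    (hx : x ∈ range (mulLeft K (a ^ m))) (n : ℕ) :
    (c • a ^ n) * x ∈ range (mulLeft K (a ^ (n + m))) := by
  obtain ⟨y, rfl⟩ := hx
  exact ⟨c • y, by simp [pow_add]⟩

end PowerFiltration

section SingleIndex

variable {K F : Type*} [CommRing K] [Ring F] [Algebra K F]
  {a : F} {u : ℕ → F} {B : Module.Basis β K F} {φ : β → ℕ} {fmax : β → β} {epow : ℕ → β → β}

theorem repr_eq_zero_of_mem_range_pow
    (hspan : ∀ p, range (mulLeft K (a ^ p)) = span K (B '' {b | p ≤ φ b}))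
    {p : ℕ} {v : F} (hv : v ∈ range (mulLeft K (a ^ p))) {b : β} (hb : φ b < p) :
    B.repr v b = 0 :=
  B.repr_eq_zero_of_mem_span_image (hspan p ▸ hv) (show ¬p ≤ φ b from not_le.2 hb)

theorem epow_fmax_eq [Nontrivial K]
    (hspan : ∀ p, range (mulLeft K (a ^ p)) = span K (B '' {b | p ≤ φ b}))
    (hepow : ∀ n c, φ c = 0 → fmax (epow n c) = c ∧
      u n * B c - B (epow n c) ∈ range (mulLeft K (a ^ (n + 1))))
    {b : β} (hb0 : φ (fmax b) = 0)
    (hb : B b - u (φ b) * B (fmax b) ∈ range (mulLeft K (a ^ (φ b + 1)))) :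
    epow (φ b) (fmax b) = b := by
  have hsub := add_mem hb (hepow (φ b) (fmax b) hb0).2
  rw [sub_add_sub_cancel, hspan] at hsub
  exact B.eq_of_sub_mem_span_image hsub (by simp)

/-- On a basis vector `B c` with `φ c = 0` this is `hepow`; for `φ c > 0` both sides vanish,
since then `u (φ b) * B c ∈ a ^ (φ b + 1) F`. -/
theorem repr_mul_eq_repr_fmax (hu : ∀ n, ∃ c : K, u n = c • a ^ n)
    (hspan : ∀ p, range (mulLeft K (a ^ p)) = span K (B '' {b | p ≤ φ b}))
    (hepow : ∀ n c, φ c = 0 → fmax (epow n c) = c ∧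
      u n * B c - B (epow n c) ∈ range (mulLeft K (a ^ (n + 1))))
    {b : β} (hb0 : φ (fmax b) = 0) (hb : epow (φ b) (fmax b) = b) (x : F) :
    B.repr (u (φ b) * x) b = B.repr x (fmax b) := by
  classical
  suffices Finsupp.lapply b ∘ₗ B.repr.toLinearMap ∘ₗ mulLeft K (u (φ b)) =
      Finsupp.lapply (fmax b) ∘ₗ B.repr.toLinearMap from LinearMap.congr_fun this x
  refine B.ext fun c => ?_
  simp only [coe_comp, Function.comp_apply, mulLeft_apply, LinearEquiv.coe_coe,
    Finsupp.lapply_apply, Module.Basis.repr_self]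
  rcases Nat.eq_zero_or_pos (φ c) with hc | hc
  · obtain ⟨hfc, hmem⟩ := hepow (φ b) c hc
    have hcoeff := repr_eq_zero_of_mem_range_pow hspan hmem (b := b) (Nat.lt_succ_self _)
    rw [map_sub, Finsupp.sub_apply, sub_eq_zero, B.repr_self] at hcoeff
    rw [hcoeff, Finsupp.single_apply, Finsupp.single_apply]
    exact if_congr ⟨fun h => by rw [← h, hfc], fun h => h ▸ hb⟩ rfl rfl
  · have hBc : B c ∈ range (mulLeft K (a ^ 1)) :=
      hspan 1 ▸ subset_span ⟨c, hc, rfl⟩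
    obtain ⟨k, hk⟩ := hu (φ b)
    have hmem := smul_pow_mul_mem_range_mulLeft_pow_add k a hBc (φ b)
    rw [← hk] at hmem
    have hne : c ≠ fmax b := fun h => hc.ne' (h ▸ hb0)
    rw [repr_eq_zero_of_mem_range_pow hspan hmem (Nat.lt_succ_self _),
      Finsupp.single_eq_of_ne hne.symm]

theorem lt_or_eq_and_repr_fmax_eq [Nontrivial K] (hu : ∀ n, ∃ c : K, u n = c • a ^ n)
    (hspan : ∀ p, range (mulLeft K (a ^ p)) = span K (B '' {b | p ≤ φ b}))
    (hepow : ∀ n c, φ c = 0 → fmax (epow n c) = c ∧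
      u n * B c - B (epow n c) ∈ range (mulLeft K (a ^ (n + 1))))
    {n : ℕ} {v w : F} (hvw : v - u n * w ∈ range (mulLeft K (a ^ (n + 1))))
    {b : β} (hb0 : φ (fmax b) = 0)
    (hb : B b - u (φ b) * B (fmax b) ∈ range (mulLeft K (a ^ (φ b + 1))))
    (hne : B.repr v b ≠ 0) :
    n < φ b ∨ n = φ b ∧ B.repr w (fmax b) = B.repr v b := by
  have hv : v ∈ range (mulLeft K (a ^ n)) := by
    obtain ⟨k, hk⟩ := hu n
    have hw := smul_pow_mul_mem_range_mulLeft_pow_add k a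
      (⟨w, by simp⟩ : w ∈ range (mulLeft K (a ^ 0))) n
    rw [← hk] at hw
    simpa using add_mem (range_mulLeft_pow_succ_le a n hvw) hw
  have hle : n ≤ φ b := not_lt.1 fun h => hne (repr_eq_zero_of_mem_range_pow hspan hv h)
  refine hle.lt_or_eq.imp_right fun hn => ⟨hn, ?_⟩
  subst hn
  have hcoeff := repr_eq_zero_of_mem_range_pow hspan hvw (b := b) (Nat.lt_succ_self _)
  rw [map_sub, Finsupp.sub_apply, sub_eq_zero] at hcoeff
  rw [hcoeff, repr_mul_eq_repr_fmax hu hspan hepow hb0 (epow_fmax_eq hspan hepow hb0 hb)]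

end SingleIndex

theorem lexLeL_stringPhi {β' β'' : Type*} {φ' : I → β' → ℕ} {φ'' : I → β'' → ℕ}
    {fmax' : I → β' → β'} {fmax'' : I → β'' → β''} (R : β' → β'' → Prop)
    (hR : ∀ i b' b'', R b' b'' →
      φ' i b' < φ'' i b'' ∨ φ' i b' = φ'' i b'' ∧ R (fmax' i b') (fmax'' i b''))
    (l : List I) {b' : β'} {b'' : β''} (h : R b' b'') :
    lexLeL (stringPhi φ' fmax' l b') (stringPhi φ'' fmax'' l b'') := by
  induction l generalizing b' b'' with
  | nil => trivial
  | cons i l ih => exact (hR i b' b'' h).imp_right (And.imp_right ih)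

theorem stmt_16_general {K F : Type*} [Field K] [Ring F] [Algebra K F]
    {β' β'' : Type*}
    (θ : I → F) (θpow : I → ℕ → F)
    (hpow : ∀ (i : I) (n : ℕ), ∃ c : K, c ≠ 0 ∧ θpow i n = c • θ i ^ n)
    (B' : Module.Basis β' K F) (B'' : Module.Basis β'' K F)
    (wt' : β' → (I →₀ ℕ)) (wt'' : β'' → (I →₀ ℕ))
    (φ' : I → β' → ℕ) (φ'' : I → β'' → ℕ)
    (fmax' : I → β' → β') (fmax'' : I → β'' → β'')
    (epow'' : I → ℕ → β'' → β'')
    (hspan'' : ∀ (i : I) (p : ℕ),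
      LinearMap.range (LinearMap.mulLeft K (θ i ^ p)) =
        Submodule.span K (B'' '' {b : β'' | p ≤ φ'' i b}))
    (hfm' : ∀ (i : I) (b : β'), φ' i (fmax' i b) = 0 ∧
      B' b - θpow i (φ' i b) * B' (fmax' i b) ∈
        LinearMap.range (LinearMap.mulLeft K (θ i ^ (φ' i b + 1))))
    (hfm'' : ∀ (i : I) (b : β''), φ'' i (fmax'' i b) = 0 ∧
      B'' b - θpow i (φ'' i b) * B'' (fmax'' i b) ∈
        LinearMap.range (LinearMap.mulLeft K (θ i ^ (φ'' i b + 1))))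
    (hep'' : ∀ (i : I) (n : ℕ) (b : β''), φ'' i b = 0 →
      φ'' i (epow'' i n b) = n ∧ fmax'' i (epow'' i n b) = b ∧
      θpow i n * B'' b - B'' (epow'' i n b) ∈
        LinearMap.range (LinearMap.mulLeft K (θ i ^ (n + 1)))) :
    (∀ (i : I) (b' : β') (b'' : β''), wt' b' = wt'' b'' →
      B''.repr (B' b') b'' ≠ 0 →
        φ' i b' < φ'' i b'' ∨
        ∃ b''₁ : β'', φ'' i b''₁ = 0 ∧ b'' = epow'' i (φ' i b') b''₁ ∧
          B''.repr (B' (fmax' i b')) b''₁ = B''.repr (B' b') b'') ∧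
    (∀ (l : List I) (b' : β') (b'' : β''),
      B''.repr (B' b') b'' ≠ 0 →
        lexLeL (stringPhi φ' fmax' l b') (stringPhi φ'' fmax'' l b'')) := by
  have step : ∀ i b' b'', B''.repr (B' b') b'' ≠ 0 → φ' i b' < φ'' i b'' ∨
      φ' i b' = φ'' i b'' ∧ B''.repr (B' (fmax' i b')) (fmax'' i b'') = B''.repr (B' b') b'' :=
    fun i b' b'' => lt_or_eq_and_repr_fmax_eq (fun n => (hpow i n).imp fun _ => And.right)
      (hspan'' i) (fun n c hc => (hep'' i n c hc).2) (hfm' i b').2 (hfm'' i b'').1 (hfm'' i b'').2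
  refine ⟨fun i b' b'' _ hne => (step i b' b'' hne).imp_right fun ⟨hφ, hrepr⟩ =>
      ⟨fmax'' i b'', (hfm'' i b'').1, ?_, hrepr⟩,
    fun l b' b'' hne => lexLeL_stringPhi (fun b' b'' => B''.repr (B' b') b'' ≠ 0)
      (fun i b' b'' hne => (step i b' b'' hne).imp_right fun h => ⟨h.1, h.2 ▸ hne⟩) l hne⟩
  rw [hφ, epow_fmax_eq (hspan'' i) (fun n c hc => (hep'' i n c hc).2) (hfm'' i b'').1
    (hfm'' i b'').2]

/-- for two bases of canonical type, a nonzero transition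
coefficient forces the dichotomy on `φᵢ` and `f̃ᵢ^max`, and consequently the
string parametrizations are lexicographically ordered. -/
theorem stmt_16 {K F : Type*} [Field K] [Ring F] [Algebra K F]
    {β' β'' : Type*}
    (θ : I → F) (θpow : I → ℕ → F)
    (hpow : ∀ (i : I) (n : ℕ), ∃ c : K, c ≠ 0 ∧ θpow i n = c • θ i ^ n)
    (B' : Module.Basis β' K F) (B'' : Module.Basis β'' K F)
    (wt' : β' → (I →₀ ℕ)) (wt'' : β'' → (I →₀ ℕ))
    (φ' : I → β' → ℕ) (φ'' : I → β'' → ℕ)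
    (fmax' : I → β' → β') (fmax'' : I → β'' → β'')
    (epow'' : I → ℕ → β'' → β'')
    (hspan' : ∀ (i : I) (p : ℕ),
      LinearMap.range (LinearMap.mulLeft K (θ i ^ p)) =
        Submodule.span K (B' '' {b : β' | p ≤ φ' i b}))
    (hspan'' : ∀ (i : I) (p : ℕ),
      LinearMap.range (LinearMap.mulLeft K (θ i ^ p)) =
        Submodule.span K (B'' '' {b : β'' | p ≤ φ'' i b}))
    (hfm' : ∀ (i : I) (b : β'), φ' i (fmax' i b) = 0 ∧
      B' b - θpow i (φ' i b) * B' (fmax' i b) ∈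
        LinearMap.range (LinearMap.mulLeft K (θ i ^ (φ' i b + 1))))
    (hfm'' : ∀ (i : I) (b : β''), φ'' i (fmax'' i b) = 0 ∧
      B'' b - θpow i (φ'' i b) * B'' (fmax'' i b) ∈
        LinearMap.range (LinearMap.mulLeft K (θ i ^ (φ'' i b + 1))))
    (hep'' : ∀ (i : I) (n : ℕ) (b : β''), φ'' i b = 0 →
      φ'' i (epow'' i n b) = n ∧ fmax'' i (epow'' i n b) = b ∧
      θpow i n * B'' b - B'' (epow'' i n b) ∈
        LinearMap.range (LinearMap.mulLeft K (θ i ^ (n + 1)))) :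
    (∀ (i : I) (b' : β') (b'' : β''), wt' b' = wt'' b'' →
      B''.repr (B' b') b'' ≠ 0 →
        φ' i b' < φ'' i b'' ∨
        ∃ b''₁ : β'', φ'' i b''₁ = 0 ∧ b'' = epow'' i (φ' i b') b''₁ ∧
          B''.repr (B' (fmax' i b')) b''₁ = B''.repr (B' b') b'') ∧
    (∀ (l : List I) (b' : β') (b'' : β''),
      B''.repr (B' b') b'' ≠ 0 →
        lexLeL (stringPhi φ' fmax' l b') (stringPhi φ'' fmax'' l b'')) :=
  stmt_16_general θ θpow hpow B' B'' wt' wt'' φ' φ'' fmax' fmax'' epow'' hspan'' hfm' hfm'' hep''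

end Stmt16
end
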